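/- The following identity of formal power series in q holds: ( Σ_{n=0}^{∞} D_1(n) q^n ) · (1 − q)(1 − q^2)^2(1 − q^3) = 1; equivalently, the generating function of D_1(n) is 1/((1−q)(1−q^2)^2(1−q^3)). -/

import Mathlib

open Finset

/-- The plane partition diamond condition of length `k` on `a : Fin (3k+1) → ℕ`,
where `a i` (0-indexed) corresponds to `a_{i+1}` (1-indexed). -/
def IsDiamond (k : ℕ) (a : Fin (3 * k + 1) → ℕ) : Prop :=
  ∀ i : ℕ, ∀ _ : i < k,
    a ⟨3 * i + 1, by omega⟩ ≤ a ⟨3 * i, by omega⟩ ∧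
    a ⟨3 * i + 2, by omega⟩ ≤ a ⟨3 * i, by omega⟩ ∧
    a ⟨3 * i + 3, by omega⟩ ≤ a ⟨3 * i + 1, by omega⟩ ∧
    a ⟨3 * i + 3, by omega⟩ ≤ a ⟨3 * i + 2, by omega⟩

/-- `ppD k n`: the number of plane partition diamonds of length `k` of `n`. -/
noncomputable def ppD (k n : ℕ) : ℕ :=
  Nat.card {a : Fin (3 * k + 1) → ℕ // IsDiamond k a ∧ ∑ i, a i = n}

/-- The restricted partition function `p_a(n)` for a sequence `a = (a_1, …, a_r)`. -/
noncomputable def rp {r : ℕ} (a : Fin r → ℕ) (n : ℕ) : ℕ :=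
  Nat.card {x : Fin r → ℕ // ∑ i, a i * x i = n}

/-- The sequence `a[k]`, 0-indexed: `seqA k i = a[k]_{i+1}`. -/
def seqA (k : ℕ) : Fin (3 * k + 1) → ℕ := fun i =>
  if ((i : ℕ) + 1) % 6 = 4 then ((i : ℕ) + 1) / 2 else (i : ℕ) + 1

/-- `α_k = ⌊(k+1)/2⌋`. -/
def alphaK (k : ℕ) : ℕ := (k + 1) / 2

/-- `m_J = ∑_{i ∈ J} (3i − 1)`. -/
def mJ (J : Finset ℕ) : ℕ := ∑ i ∈ J, (3 * i - 1)

/-- `A_k = {1 ≤ j ≤ 3k+1 : j ≢ 4 (mod 6)}`. -/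
def setA (k : ℕ) : Finset ℕ := (Finset.Icc 1 (3 * k + 1)).filter (fun j => j % 6 ≠ 4)

/-- `D[k] = lcm A_k`. -/
def DK (k : ℕ) : ℕ := (setA k).lcm id

/-- `β_k = 5α_k − 2` if `k` is odd, `β_k = 5α_k + 1` if `k` is even. -/
def betaK (k : ℕ) : ℕ := if k % 2 = 1 then 5 * alphaK k - 2 else 5 * alphaK k + 1

/-- `φ_k(j) = j + ⌈(j−3)/5⌉` (the value is a nonnegative integer for `j ≥ 1`). -/
def phiK (j : ℕ) : ℕ := ((j : ℤ) + ⌈((j : ℚ) - 3) / 5⌉).toNat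

/-- `ψ_k(j) = j − ⌈(j−3)/6⌉` (the value is a nonnegative integer for `j ≥ 1`). -/
def psiK (j : ℕ) : ℕ := ((j : ℤ) - ⌈((j : ℚ) - 3) / 6⌉).toNat

/-- `B'_k = {j ∈ B_k : j ≡ 2 or 4 (mod 5), j ≤ φ_k⁻¹(3α_k − 1)}`. -/
def setB' (k : ℕ) : Finset ℕ :=
  (Finset.Icc 1 (betaK k)).filter
    (fun j => (j % 5 = 2 ∨ j % 5 = 4) ∧ j ≤ psiK (3 * alphaK k - 1))

/-- `ε_k(j) = 2` if `j ∈ B'_k`, else `1`. -/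
def epsK (k j : ℕ) : ℕ := if j ∈ setB' k then 2 else 1

/-- `s_k(t_1, …, t_{β_k}) = ∏_{j ∈ B'_k} (1 + min{t_j, 2(D[k]/φ_k(j) − 1) − t_j})`. -/
def sK (k : ℕ) (t : ℕ → ℕ) : ℕ :=
  ∏ j ∈ setB' k, (1 + min (t j) (2 * (DK k / phiK j - 1) - t j))

/-- Turn a `Fin β`-indexed tuple into a 1-indexed family: `tOf t j = t_j` for `1 ≤ j ≤ β`. -/
def tOf {β : ℕ} (t : Fin β → ℕ) : ℕ → ℕ := fun j =>
  if h : 1 ≤ j ∧ j ≤ β then t ⟨j - 1, by omega⟩ else 0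

/-- Unsigned Stirling numbers of the first kind: `x(x+1)⋯(x+r−1) = ∑_k stirling1 r k * x^k`. -/
def stirling1 : ℕ → ℕ → ℕ
  | 0, 0 => 1
  | 0, _ + 1 => 0
  | _ + 1, 0 => 0
  | n + 1, m + 1 => stirling1 n m + n * stirling1 n (m + 1)


/-!
Split the diamonds according to whether `a₂ ≤ a₃` or `a₂ > a₃`. In the first case
`(a₁, a₂, a₃, a₄) = (d + u + t + w, d + u, d + u + t, d)` with `d, u, t, w ≥ 0` free, of weight
`4d + 3u + 2t + w`; in the second `(a₁, a₂, a₃, a₄) = (d + u + t + w + 1, d + u + t + 1, d + u, d)`,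
of weight `4d + 3u + 2t + w + 2`. Hence the generating function is
`(1 + q²) / ((1 - q)(1 - q²)(1 - q³)(1 - q⁴))`, and `(1 + q²)(1 - q²) = 1 - q⁴`.
The generating function of the solutions of `∑ wᵢ xᵢ = n` is `∏ 1 / (1 - q^wᵢ)`, by peeling off
one variable at a time: either `x₀ = 0`, or `x₀ = k + 1` and the weight drops by `w₀`.
-/

open PowerSeries

noncomputable def genFun {α : Type*} (f : α → ℕ) : PowerSeries ℤ :=
  PowerSeries.mk fun n => (Nat.card {x // f x = n} : ℤ)

section genFun

variable {α β : Type*}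

theorem genFun_comp_equiv (f : α → ℕ) (e : β ≃ α) : genFun (f ∘ e) = genFun f := by
  ext n
  simp only [genFun, coeff_mk]
  exact congrArg _ (Nat.card_congr (e.subtypeEquiv fun _ => Iff.rfl))

theorem genFun_add_const (f : α → ℕ) (a : ℕ) :
    genFun (fun x => f x + a) = X ^ a * genFun f := by
  ext n
  rw [PowerSeries.coeff_X_pow_mul']
  simp only [genFun, coeff_mk]
  split_ifs with ha
  · exact congrArg _ (Nat.card_congr (Equiv.subtypeEquivRight fun _ => by omega))
  · have : IsEmpty {x // f x + a = n} := ⟨fun x => ha (by omega)⟩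
    simp

theorem genFun_sumElim (f : α → ℕ) (g : β → ℕ) (hf : ∀ n, Finite {x // f x = n})
    (hg : ∀ n, Finite {y // g y = n}) : genFun (Sum.elim f g) = genFun f + genFun g := by
  ext n
  have := hf n
  have := hg n
  simp [genFun, Nat.card_congr Equiv.subtypeSum, Nat.card_sum]

theorem finite_fiber_add_const {f : α → ℕ} (hf : ∀ n, Finite {x // f x = n}) (a n : ℕ) :
    Finite {x // f x + a = n} :=
  have := hf (n - a)
  Finite.of_injective (fun x : {x // f x + a = n} => (⟨x.1, by omega⟩ : {x // f x = n - a}))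
    fun _ _ h => Subtype.ext (by simpa using h)

def sumNatProdEquiv (α : Type*) : α ⊕ ℕ × α ≃ ℕ × α where
  toFun := Sum.elim (fun x => (0, x)) fun q => (q.1 + 1, q.2)
  invFun
    | (0, x) => .inl x
    | (k + 1, x) => .inr (k, x)
  left_inv := by rintro (x | ⟨k, x⟩) <;> rfl
  right_inv := by rintro ⟨_ | k, x⟩ <;> rfl

theorem genFun_nat_prod_mul_one_sub_X_pow (f : α → ℕ) (a : ℕ)
    (hf : ∀ n, Finite {x // f x = n})
    (hg : ∀ n, Finite {q : ℕ × α // a * q.1 + f q.2 = n}) :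
    genFun (fun q : ℕ × α => a * q.1 + f q.2) * (1 - X ^ a) = genFun f := by
  set g := fun q : ℕ × α => a * q.1 + f q.2
  have hsplit : g ∘ sumNatProdEquiv α = Sum.elim f fun q => g q + a := by
    ext (x | ⟨k, x⟩)
    · simp [g, sumNatProdEquiv]
    · simp only [g, sumNatProdEquiv, Equiv.coe_fn_mk, Function.comp_apply, Sum.elim_inr]
      ring
  have := genFun_comp_equiv g (sumNatProdEquiv α)
  rw [hsplit, genFun_sumElim _ _ hf, genFun_add_const] at this
  · linear_combination -this
  · exact finite_fiber_add_const hg a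

end genFun

theorem finite_rp_fiber {r : ℕ} {w : Fin r → ℕ} (hw : ∀ i, 0 < w i) (n : ℕ) :
    Finite {x : Fin r → ℕ // ∑ i, w i * x i = n} := by
  refine Finite.of_injective (fun x i => (⟨x.1 i, ?_⟩ : Fin (n + 1))) fun x y h => ?_
  · calc x.1 i ≤ w i * x.1 i := Nat.le_mul_of_pos_left _ (hw i)
      _ ≤ ∑ j, w j * x.1 j :=
        Finset.single_le_sum (f := fun j => w j * x.1 j) (fun _ _ => Nat.zero_le _) (mem_univ i)
      _ < n + 1 := by omega
  · exact Subtype.ext (funext fun i => by simpa using congrFun h i)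

theorem mk_rp_mul_prod_one_sub_X_pow {r : ℕ} (w : Fin r → ℕ) (hw : ∀ i, 0 < w i) :
    (PowerSeries.mk fun n => (rp w n : ℤ)) * ∏ i, (1 - X ^ w i) = 1 := by
  induction r with
  | zero =>
    ext n
    rcases n with _ | n <;> simp [rp, eq_comm]
  | succ r ih =>
    set e := Fin.consEquiv fun _ : Fin (r + 1) => ℕ
    have hcons : (fun x => ∑ i, w i * x i) ∘ e =
        fun q => w 0 * q.1 + ∑ i : Fin r, w i.succ * q.2 i := by
      ext q
      simp [e, Fin.sum_univ_succ]
    have hpeel := genFun_nat_prod_mul_one_sub_X_pow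
      (fun x : Fin r → ℕ => ∑ i, w i.succ * x i) (w 0) (finite_rp_fiber fun i => hw i.succ)
      fun n => by
        have := finite_rp_fiber hw n
        exact Finite.of_equiv _
          (e.subtypeEquiv (q := fun x => ∑ i, w i * x i = n) fun q => by
            rw [← congrFun hcons q]; rfl).symm
    rw [← hcons, genFun_comp_equiv] at hpeel
    rw [Fin.prod_univ_succ, ← mul_assoc]
    exact (congrArg (· * _) hpeel).trans (ih _ fun i => hw i.succ)

theorem isDiamond_one_iff (a : Fin 4 → ℕ) :
    IsDiamond 1 a ↔ a 1 ≤ a 0 ∧ a 2 ≤ a 0 ∧ a 3 ≤ a 1 ∧ a 3 ≤ a 2 := by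
  refine ⟨fun h => h 0 Nat.one_pos, fun h i hi => ?_⟩
  obtain rfl : i = 0 := by omega
  exact h

def diamondOneEquiv : (Fin 4 → ℕ) ⊕ (Fin 4 → ℕ) ≃ {a : Fin 4 → ℕ // IsDiamond 1 a} where
  toFun
    | .inl x => ⟨![x 0 + x 1 + x 2 + x 3, x 0 + x 1, x 0 + x 1 + x 2, x 0], by
        simp only [isDiamond_one_iff, Matrix.cons_val]; omega⟩
    | .inr x => ⟨![x 0 + x 1 + x 2 + x 3 + 1, x 0 + x 1 + x 2 + 1, x 0 + x 1, x 0], by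
        simp only [isDiamond_one_iff, Matrix.cons_val]; omega⟩
  invFun a :=
    if a.1 1 ≤ a.1 2 then .inl ![a.1 3, a.1 1 - a.1 3, a.1 2 - a.1 1, a.1 0 - a.1 2]
    else .inr ![a.1 3, a.1 2 - a.1 3, a.1 1 - a.1 2 - 1, a.1 0 - a.1 1]
  left_inv := by
    rintro (x | x) <;> dsimp only
    · rw [if_pos (by simp)]
      congr 1
      ext i; fin_cases i <;> simp
    · rw [if_neg (by simp)]
      congr 1
      ext i; fin_cases i <;> simp; omega
  right_inv := by
    rintro ⟨a, ha⟩
    rw [isDiamond_one_iff] at ha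
    dsimp only
    by_cases h : a 1 ≤ a 2
    · rw [if_pos h]
      ext i; fin_cases i <;> simp <;> omega
    · rw [if_neg h]
      ext i; fin_cases i <;> simp <;> omega

theorem mk_ppD_one_eq_mk_rp_mul :
    (PowerSeries.mk fun n => (ppD 1 n : ℤ)) =
      (PowerSeries.mk fun n => (rp ![4, 3, 2, 1] n : ℤ)) * (1 + X ^ 2) := by
  set s := fun x : Fin 4 → ℕ => ∑ i, ![4, 3, 2, 1] i * x i
  have hs : ∀ n, Finite {x // s x = n} := finite_rp_fiber (by decide)
  have hppD : (PowerSeries.mk fun n => (ppD 1 n : ℤ)) =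
      genFun fun a : {a : Fin 4 → ℕ // IsDiamond 1 a} => ∑ i, a.1 i := by
    ext n
    simp only [genFun, coeff_mk]
    exact congrArg _ (Nat.card_congr (Equiv.subtypeSubtypeEquivSubtypeInter _ _).symm)
  have hweight : (fun a : {a : Fin 4 → ℕ // IsDiamond 1 a} => ∑ i, a.1 i) ∘ diamondOneEquiv =
      Sum.elim s fun x => s x + 2 := by
    ext (x | x) <;>
      simp only [s, diamondOneEquiv, Equiv.coe_fn_mk, Function.comp_apply, Sum.elim_inl,
        Sum.elim_inr, Fin.sum_univ_four, Matrix.cons_val] <;> ring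
  rw [hppD, ← genFun_comp_equiv _ diamondOneEquiv, hweight,
    genFun_sumElim _ _ hs (finite_fiber_add_const hs 2), genFun_add_const]
  change genFun s + X ^ 2 * genFun s = genFun s * (1 + X ^ 2)
  ring

/-- MacMahon's identity
`(∑ D_1(n) qⁿ) · (1 − q)(1 − q²)²(1 − q³) = 1` in `ℤ[[q]]`. -/
theorem stmt11 :
    (PowerSeries.mk fun n => (ppD 1 n : ℤ)) *
        ((1 - (PowerSeries.X : PowerSeries ℤ)) *
          (1 - (PowerSeries.X : PowerSeries ℤ) ^ 2) ^ 2 *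
          (1 - (PowerSeries.X : PowerSeries ℤ) ^ 3))
      = 1 := by
  calc _ = (PowerSeries.mk fun n => (rp ![4, 3, 2, 1] n : ℤ)) *
        ∏ i, (1 - X ^ ![4, 3, 2, 1] i) := by
        rw [mk_ppD_one_eq_mk_rp_mul, Fin.prod_univ_four]
        simp only [Matrix.cons_val]
        ring
    _ = 1 := mk_rp_mul_prod_one_sub_X_pow _ (by decide)
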